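/- Let g₁, g₂ be commuting finite-order automorphisms of a finite-dimensional complex vector space V, with ages a₁ = L(g₁⁻¹)(V), a₂ = L(g₂⁻¹)(V), a₁₂ = L((g₁g₂)⁻¹)(V). Then a₁ + a₂ − a₁₂ = V⁻-rank := L(g₁⁻¹)(V) + L(g₂⁻¹)(V) − L(g₂⁻¹g₁⁻¹)(V) is a non-negative integer, and the sign (−1)^{a₁+a₂−a₁₂} is well-defined; consequently e^{iπa₁₂}·(−1)^{a₁+a₂−a₁₂} = e^{iπ(a₁+a₂)}. -/

import Mathlib

/-- The logarithmic trace `L(g)(V)` of an automorphism `g` with `g ^ n = 1`: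
the sum over `k < n` of `(k/n) · dim V_{k/n}`, where `V_{k/n}` is the eigenspace
of `g` for the eigenvalue `exp(2πi·k/n)`. -/
noncomputable def logTrace {V : Type} [AddCommGroup V] [Module ℂ V]
    (n : ℕ) (g : V →ₗ[ℂ] V) : ℚ :=
  ∑ k ∈ Finset.range n, (k : ℚ) / (n : ℚ) *
    (Module.finrank ℂ
      (Module.End.eigenspace g (Complex.exp (2 * (Real.pi : ℂ) * Complex.I * ((k : ℂ) / (n : ℂ))))) : ℚ)

/-! Since `A = g₁⁻¹` and `B = g₂⁻¹` commute and have finite order, `V` is the direct sum of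
their joint eigenspaces `W i j`, on which `A` and `B` act by `exp(2πi·i/n)` and `exp(2πi·j/n)`
with `i, j < n`; hence `AB` acts there by `exp(2πi·k/n)` with `k = (i + j) mod n`. Reading the
three ages off this decomposition gives `L(A) + L(B) - L(AB) = ∑ ⌊(i + j)/n⌋ · dim W i j`,
a natural number `m`, and then `e^{iπ(a₁ + a₂)} = e^{iπ a₁₂} e^{iπ m} = e^{iπ a₁₂} (-1)^m`. -/

open Module Module.End

lemma iSup_comp_eq_iSup_of_ne_bot {α ι κ : Type*} [CompleteLattice α] {W : ι → α} {e : κ → ι}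
    (h : ∀ i, W i ≠ ⊥ → i ∈ Set.range e) : ⨆ k, W (e k) = ⨆ i, W i := by
  refine le_antisymm (iSup_comp_le W e) (iSup_le fun i => ?_)
  by_cases hi : W i = ⊥
  · simp [hi]
  · obtain ⟨k, rfl⟩ := h i hi
    exact le_iSup (W ∘ e) k

section Field

variable {K V : Type*} [Field K] [AddCommGroup V] [Module K V]

lemma Finset.SupIndep.finrank_sup [FiniteDimensional K V] {ι : Type*} {W : ι → Submodule K V}
    {s : Finset ι} (hs : s.SupIndep W) : finrank K ↥(s.sup W) = ∑ i ∈ s, finrank K ↥(W i) := by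
  classical
  induction s using Finset.induction_on with
  | empty => simp
  | @insert a s ha ih =>
    have hdisj : Disjoint (W a) (s.sup W) :=
      hs (Finset.subset_insert a s) (Finset.mem_insert_self a s) ha
    rw [Finset.sup_insert, Finset.sum_insert ha, ← ih (hs.subset (Finset.subset_insert a s)),
      ← Submodule.finrank_sup_add_finrank_inf_eq, hdisj.eq_bot, finrank_bot, add_zero]

namespace Module.End

lemma HasEigenvalue.pow_eq_one {f : End K V} {n : ℕ} (hf : f ^ n = 1) {μ : K}
    (hμ : f.HasEigenvalue μ) : μ ^ n = 1 := by
  obtain ⟨v, hv⟩ := hμ.exists_hasEigenvector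
  have h : (μ ^ n - 1) • v = 0 := by
    rw [sub_smul, one_smul, ← hv.pow_apply, hf, one_apply, sub_self]
  exact sub_eq_zero.mp ((smul_eq_zero.mp h).resolve_right hv.2)

lemma isSemisimple_of_pow_eq_one [CharZero K] {f : End K V} {n : ℕ} (hn : n ≠ 0)
    (hf : f ^ n = 1) : f.IsSemisimple := by
  refine isSemisimple_of_squarefree_aeval_eq_zero
    (Polynomial.separable_X_pow_sub_C 1 (Nat.cast_ne_zero.mpr hn) one_ne_zero).squarefree ?_
  simp [hf]

lemma iSupIndep_eigenspace_inf_eigenspace (A B : End K V) :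
    iSupIndep fun μ : K × K => A.eigenspace μ.1 ⊓ B.eigenspace μ.2 := by
  have h := (iSupIndep.iInf (fun b : Bool => (cond b B A).eigenspace)
    fun b => eigenspaces_iSupIndep _).comp
    (f := fun μ : K × K => fun b => cond b μ.2 μ.1) fun μ ν h =>
      Prod.ext (by simpa using congrFun h false) (by simpa using congrFun h true)
  convert h using 2 with μ
  simp [iInf_bool_eq, inf_comm]

lemma iSup_eigenspace_inf_eigenspace_eq_top [FiniteDimensional K V] {A B : End K V}
    (hAB : Commute A B) (hA : ⨆ μ, A.eigenspace μ = ⊤) (hB : ⨆ ν, B.eigenspace ν = ⊤) :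
    ⨆ μ : K × K, A.eigenspace μ.1 ⊓ B.eigenspace μ.2 = ⊤ := by
  rw [iSup_prod, ← hA]
  refine iSup_congr fun μ => ?_
  exact (Submodule.eq_iSup_inf_genEigenspace 1 (mapsTo_genEigenspace_of_comm hAB μ 1) hB).symm

end Module.End

end Field

noncomputable def unitRoot (n k : ℕ) : ℂ :=
  Complex.exp (2 * (Real.pi : ℂ) * Complex.I * ((k : ℂ) / (n : ℂ)))

lemma unitRoot_eq_pow (n k : ℕ) :
    unitRoot n k = Complex.exp (2 * Real.pi * Complex.I / n) ^ k := by
  rw [unitRoot, ← Complex.exp_nat_mul]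
  ring_nf

lemma unitRoot_injective {n : ℕ} : Function.Injective fun k : Fin n => unitRoot n k :=
  fun k l h => Fin.ext <| (Complex.isPrimitiveRoot_exp n k.pos.ne').pow_inj k.2 l.2 <| by
    simpa only [unitRoot_eq_pow] using h

lemma exists_unitRoot_eq {n : ℕ} (hn : n ≠ 0) {μ : ℂ} (hμ : μ ^ n = 1) :
    ∃ k : Fin n, unitRoot n k = μ := by
  have : NeZero n := ⟨hn⟩
  obtain ⟨k, hk, h⟩ := (Complex.isPrimitiveRoot_exp n hn).eq_pow_of_pow_eq_one hμ
  exact ⟨⟨k, hk⟩, by rw [unitRoot_eq_pow]; exact h⟩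

lemma unitRoot_add {n : ℕ} (i j : Fin n) :
    unitRoot n ↑(i + j) = unitRoot n i * unitRoot n j := by
  simp only [unitRoot_eq_pow, Fin.val_add, ← pow_add]
  exact (pow_eq_pow_mod _ (Complex.isPrimitiveRoot_exp n i.pos.ne').pow_eq_one).symm

section LogTrace

variable {V : Type} [AddCommGroup V] [Module ℂ V]

lemma logTrace_eq_sum_fin (n : ℕ) (f : End ℂ V) :
    logTrace n f = ∑ k : Fin n, (k : ℚ) / n * finrank ℂ (f.eigenspace (unitRoot n k)) :=
  Finset.sum_range _

theorem logTrace_eq_sum_of_iSupIndep [FiniteDimensional ℂ V] {ι : Type*} [Fintype ι]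
    {W : ι → Submodule ℂ V} {n : ℕ} (hind : iSupIndep W) (htop : ⨆ i, W i = ⊤) (f : End ℂ V)
    (c : ι → Fin n) (hW : ∀ i, W i ≤ f.eigenspace (unitRoot n (c i))) :
    logTrace n f = ∑ i, (c i : ℚ) / n * finrank ℂ (W i) := by
  classical
  have hE : iSupIndep fun k : Fin n => f.eigenspace (unitRoot n k) :=
    (eigenspaces_iSupIndep f).comp unitRoot_injective
  have hle : ∀ k ∈ Finset.univ,
      ∑ i with c i = k, finrank ℂ (W i) ≤ finrank ℂ (f.eigenspace (unitRoot n k)) := by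
    intro k _
    rw [← (hind.supIndep' _).finrank_sup]
    exact Submodule.finrank_mono (Finset.sup_le fun i hi => (Finset.mem_filter.mp hi).2 ▸ hW i)
  have htotal : ∑ k : Fin n, finrank ℂ (f.eigenspace (unitRoot n k)) ≤
      ∑ k, ∑ i with c i = k, finrank ℂ (W i) := by
    rw [Finset.sum_fiberwise, ← (hE.supIndep' _).finrank_sup, ← (hind.supIndep' _).finrank_sup,
      Finset.sup_univ_eq_iSup W, htop, finrank_top]
    exact Submodule.finrank_le _
  have hdim := (Finset.sum_eq_sum_iff_of_le hle).mp (le_antisymm (Finset.sum_le_sum hle) htotal)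
  rw [logTrace_eq_sum_fin, ← Finset.sum_fiberwise Finset.univ c]
  refine Finset.sum_congr rfl fun k hk => ?_
  rw [← hdim k hk, Nat.cast_sum, Finset.mul_sum]
  exact Finset.sum_congr rfl fun i hi => by rw [(Finset.mem_filter.mp hi).2]

noncomputable def jointEigenspace (A B : End ℂ V) (n : ℕ) (p : Fin n × Fin n) : Submodule ℂ V :=
  A.eigenspace (unitRoot n p.1) ⊓ B.eigenspace (unitRoot n p.2)

lemma iSupIndep_jointEigenspace (A B : End ℂ V) (n : ℕ) : iSupIndep (jointEigenspace A B n) :=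
  (iSupIndep_eigenspace_inf_eigenspace A B).comp
    (f := Prod.map (fun k : Fin n => unitRoot n k) fun k : Fin n => unitRoot n k)
    (unitRoot_injective.prodMap unitRoot_injective)

variable {A B : End ℂ V} {n : ℕ}

lemma iSup_jointEigenspace_eq_top [FiniteDimensional ℂ V] (hn : n ≠ 0) (hA : A ^ n = 1)
    (hB : B ^ n = 1) (hAB : Commute A B) : ⨆ p, jointEigenspace A B n p = ⊤ := by
  rw [← iSup_eigenspace_inf_eigenspace_eq_top hAB
    (isSemisimple_of_pow_eq_one hn hA).iSup_eigenspace_eq_top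
    (isSemisimple_of_pow_eq_one hn hB).iSup_eigenspace_eq_top]
  refine iSup_comp_eq_iSup_of_ne_bot (W := fun μ : ℂ × ℂ => A.eigenspace μ.1 ⊓ B.eigenspace μ.2)
    (e := Prod.map (fun k : Fin n => unitRoot n k) fun k : Fin n => unitRoot n k) fun μ hμ => ?_
  have hμA : A.HasEigenvalue μ.1 := ne_bot_of_le_ne_bot hμ inf_le_left
  have hμB : B.HasEigenvalue μ.2 := ne_bot_of_le_ne_bot hμ inf_le_right
  obtain ⟨i, hi⟩ := exists_unitRoot_eq hn (hμA.pow_eq_one hA)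
  obtain ⟨j, hj⟩ := exists_unitRoot_eq hn (hμB.pow_eq_one hB)
  exact ⟨(i, j), Prod.ext hi hj⟩

lemma jointEigenspace_le_eigenspace_mul (p : Fin n × Fin n) :
    jointEigenspace A B n p ≤ (A * B).eigenspace (unitRoot n ↑(p.1 + p.2)) := by
  intro x hx
  obtain ⟨hxA, hxB⟩ := Submodule.mem_inf.mp hx
  rw [mem_eigenspace_iff] at hxA hxB ⊢
  rw [mul_apply, hxB, map_smul, hxA, smul_smul, unitRoot_add, mul_comm]

theorem exists_logTrace_add_logTrace_sub_logTrace_mul_eq_natCast [FiniteDimensional ℂ V]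
    (hn : n ≠ 0) (hA : A ^ n = 1) (hB : B ^ n = 1) (hAB : Commute A B) :
    ∃ m : ℕ, logTrace n A + logTrace n B - logTrace n (A * B) = m := by
  have hL := logTrace_eq_sum_of_iSupIndep (n := n) (iSupIndep_jointEigenspace A B n)
    (iSup_jointEigenspace_eq_top hn hA hB hAB)
  refine ⟨∑ p : Fin n × Fin n, (p.1 + p.2 : ℕ) / n * finrank ℂ (jointEigenspace A B n p), ?_⟩
  rw [hL A Prod.fst fun _ => inf_le_left, hL B Prod.snd fun _ => inf_le_right,
    hL (A * B) (fun p => p.1 + p.2) jointEigenspace_le_eigenspace_mul, ← Finset.sum_add_distrib,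
    ← Finset.sum_sub_distrib]
  push_cast
  refine Finset.sum_congr rfl fun p _ => ?_
  have hcarry :
      ((p.1 + p.2 : ℕ) : ℚ) = ((p.1 + p.2 : Fin n) : ℕ) + n * ((p.1 + p.2 : ℕ) / n : ℕ) := by
    rw [Fin.val_add]
    exact_mod_cast (Nat.mod_add_div _ _).symm
  push_cast at hcarry
  field_simp
  linear_combination (finrank ℂ (jointEigenspace A B n p) : ℚ) * hcarry

end LogTrace

lemma Complex.exp_pi_mul_I_mul_neg_one_pow {a b : ℂ} {m : ℕ} (h : b - a = m) :
    Complex.exp (Real.pi * Complex.I * a) * (-1) ^ m = Complex.exp (Real.pi * Complex.I * b) := by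
  rw [eq_add_of_sub_eq' h, mul_add, Complex.exp_add, mul_comm _ (m : ℂ), Complex.exp_nat_mul,
    Complex.exp_pi_mul_I]

/-- With ages `a₁ = L(g₁⁻¹)(V)`, `a₂ = L(g₂⁻¹)(V)`, `a₁₂ = L((g₁g₂)⁻¹)(V)`,
the quantity `a₁ + a₂ − a₁₂` equals the `V⁻`-rank
`L(g₁⁻¹)(V) + L(g₂⁻¹)(V) − L(g₂⁻¹g₁⁻¹)(V)`, is a non-negative integer `m`, and
`e^{iπa₁₂}·(−1)^m = e^{iπ(a₁+a₂)}`. -/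
theorem age_sign_identity {V : Type} [AddCommGroup V] [Module ℂ V]
    [FiniteDimensional ℂ V] (g₁ g₂ : V ≃ₗ[ℂ] V) (n : ℕ) (hn : 0 < n)
    (h₁ : g₁ ^ n = 1) (h₂ : g₂ ^ n = 1) (hc : g₁ * g₂ = g₂ * g₁) :
    letI a₁ : ℚ := logTrace n ((g₁⁻¹ : V ≃ₗ[ℂ] V) : V →ₗ[ℂ] V)
    letI a₂ : ℚ := logTrace n ((g₂⁻¹ : V ≃ₗ[ℂ] V) : V →ₗ[ℂ] V)
    letI a₁₂ : ℚ := logTrace n (((g₁ * g₂)⁻¹ : V ≃ₗ[ℂ] V) : V →ₗ[ℂ] V)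
    ∃ m : ℕ,
      (a₁ + a₂ - a₁₂
          = logTrace n ((g₁⁻¹ : V ≃ₗ[ℂ] V) : V →ₗ[ℂ] V)
            + logTrace n ((g₂⁻¹ : V ≃ₗ[ℂ] V) : V →ₗ[ℂ] V)
            - logTrace n ((g₂⁻¹ * g₁⁻¹ : V ≃ₗ[ℂ] V) : V →ₗ[ℂ] V)) ∧
      (a₁ + a₂ - a₁₂ = (m : ℚ)) ∧
      Complex.exp (Real.pi * Complex.I * (a₁₂ : ℂ)) * (-1 : ℂ) ^ m
        = Complex.exp (Real.pi * Complex.I * ((a₁ : ℂ) + (a₂ : ℂ))) := by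
  let φ := LinearEquiv.automorphismGroup.toLinearMapMonoidHom (R := ℂ) (M := V)
  have hpow {g : V ≃ₗ[ℂ] V} (hg : g ^ n = 1) : φ g⁻¹ ^ n = 1 := by
    rw [← map_pow, inv_pow, hg, inv_one, map_one]
  have hmul : φ (g₁ * g₂)⁻¹ = φ g₁⁻¹ * φ g₂⁻¹ := by
    rw [← map_mul, mul_inv_rev, (Commute.inv_inv hc).eq]
  obtain ⟨m, hm⟩ := exists_logTrace_add_logTrace_sub_logTrace_mul_eq_natCast hn.ne'
    (hpow h₁) (hpow h₂) ((Commute.inv_inv hc).map φ)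
  have hage : logTrace n (φ g₁⁻¹) + logTrace n (φ g₂⁻¹) - logTrace n (φ (g₁ * g₂)⁻¹) = m := by
    rw [hmul, hm]
  refine ⟨m, by rw [mul_inv_rev], hage, Complex.exp_pi_mul_I_mul_neg_one_pow ?_⟩
  exact_mod_cast hage
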